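/- arXiv:0806.2446 — 3 statements merged into one kernel-verified Lean document; each statement's English description precedes it below -/
import Mathlib

section
/- Suppose m* ∈ (0,1] satisfies either m* = 1, or H(G_{m*}|μ) = log 2. Then for every probability measure ν with H(ν|μ) ≤ log 2 and, in case m* = 1, H(ν|μ) ≤ H(G_1|μ), one has ∫φ dν − H(ν|μ) ≤ ∫φ dG_{m*} − H(G_{m*}|μ), with equality if and only if ν = G_{m*}. -/
open MeasureTheory ProbabilityTheory Filter Set

open Classical in
noncomputable def relEntropy {S : Type*} [MeasurableSpace S] (ν μ : Measure S) : EReal :=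
  if ν ≪ μ ∧ Integrable (llr ν μ) ν then ((∫ x, llr ν μ x ∂ν : ℝ) : EReal) else ⊤

/-!
For the tilt `G = μ.tilted (m • φ)` with normaliser `Z`, `log dG/dμ = m φ - log Z` gives
`H(G|μ) = m ∫φ dG - log Z` and `H(ν|G) = H(ν|μ) - m ∫φ dν + log Z`, whence
`m (ψ G - ψ ν) = H(ν|G) + (1 - m) (H(G|μ) - H(ν|μ))`. The second term is nonnegative because
`m = 1` or `H(ν|μ) ≤ log 2 = H(G|μ)`, and the first is nonnegative and vanishes only at `ν = G`
by Gibbs' inequality. Finite entropy and exponential moments make `φ` integrable against `ν`,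
by the Young inequality `t a ≤ t log t - t + exp a`.
-/

open Real InformationTheory

lemma mul_le_mul_log_sub_add_exp {t : ℝ} (ht : 0 ≤ t) (a : ℝ) :
    t * a ≤ t * log t - t + exp a := by
  rcases ht.eq_or_lt with rfl | ht
  · simpa using (exp_pos a).le
  · have h := add_one_le_exp (a - log t)
    rw [exp_sub, exp_log ht, le_div_iff₀ ht] at h
    linarith

noncomputable def gibbsFunctional {S : Type*} [MeasurableSpace S] (μ : Measure S) (φ : S → ℝ)
    (ν : Measure S) : ℝ :=
  ∫ x, φ x ∂ν - (klDiv ν μ).toReal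

section

variable {S : Type*} [MeasurableSpace S] {μ ν : Measure S} {f φ : S → ℝ} {m : ℝ}

lemma integrable_of_integrable_llr_of_integrable_exp_abs [IsFiniteMeasure μ] [IsFiniteMeasure ν]
    (hφ : Measurable φ) (hνμ : ν ≪ μ) (hllr : Integrable (llr ν μ) ν)
    (hexp : Integrable (fun x ↦ exp |φ x|) μ) :
    Integrable φ ν := by
  rw [← integrable_rnDeriv_smul_iff hνμ]
  have hbound : Integrable (fun x ↦ (ν.rnDeriv μ x).toReal * log (ν.rnDeriv μ x).toReal -
      (ν.rnDeriv μ x).toReal + exp |φ x|) μ :=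
    (((integrable_rnDeriv_mul_log_iff hνμ).mpr hllr).sub
      Measure.integrable_toReal_rnDeriv).add hexp
  refine hbound.mono' (by fun_prop) (ae_of_all _ fun x ↦ ?_)
  rw [smul_eq_mul, norm_mul, Real.norm_of_nonneg ENNReal.toReal_nonneg, Real.norm_eq_abs]
  exact mul_le_mul_log_sub_add_exp ENNReal.toReal_nonneg |φ x|

lemma integrable_tilted_mul_of_integrable_exp_mul (m : ℝ)
    (hexp : ∀ l : ℝ, Integrable (fun x ↦ exp (l * φ x)) μ) :
    Integrable φ (μ.tilted fun x ↦ m * φ x) := by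
  rw [integrable_tilted_iff (hexp m)]
  simpa [mul_comm] using
    integrable_pow_mul_exp_of_integrable_exp_mul one_ne_zero (hexp (m + 1)) (hexp (m - 1)) 1

lemma relEntropy_eq_klDiv (ν μ : Measure S) [IsProbabilityMeasure ν] [IsProbabilityMeasure μ] :
    relEntropy ν μ = klDiv ν μ := by
  by_cases h : ν ≪ μ ∧ Integrable (llr ν μ) ν
  · have hnonneg := integral_llr_add_sub_measure_univ_nonneg h.1 h.2
    simp only [probReal_univ, add_sub_cancel_right] at hnonneg
    rw [relEntropy, if_pos h, klDiv_of_ac_of_integrable h.1 h.2, EReal.coe_ennreal_ofReal]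
    simp [hnonneg]
  · rw [relEntropy, if_neg h, klDiv_eq_top_iff.mpr fun hac hint ↦ h ⟨hac, hint⟩,
      EReal.coe_ennreal_top]

lemma toReal_relEntropy (ν μ : Measure S) [IsProbabilityMeasure ν] [IsProbabilityMeasure μ] :
    (relEntropy ν μ).toReal = (klDiv ν μ).toReal := by
  rw [relEntropy_eq_klDiv, EReal.toReal_coe_ennreal]

lemma toReal_klDiv_tilted_left_self [IsProbabilityMeasure μ]
    (hf : Integrable (fun x ↦ exp (f x)) μ) (hfG : Integrable f (μ.tilted f)) :
    (klDiv (μ.tilted f) μ).toReal = ∫ x, f x ∂(μ.tilted f) - log (∫ x, exp (f x) ∂μ) := by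
  have := isProbabilityMeasure_tilted hf
  have hGμ := tilted_absolutelyContinuous μ f
  rw [toReal_klDiv_of_measure_eq hGμ (by simp), llr_def,
    integral_congr_ae (hGμ.ae_le (log_rnDeriv_tilted_left_self hf)),
    integral_sub hfG (integrable_const _)]
  simp

lemma toReal_klDiv_tilted_right [IsProbabilityMeasure μ] [IsProbabilityMeasure ν] (hνμ : ν ≪ μ)
    (hllr : Integrable (llr ν μ) ν) (hfν : Integrable f ν)
    (hf : Integrable (fun x ↦ exp (f x)) μ) :
    (klDiv ν (μ.tilted f)).toReal =
      (klDiv ν μ).toReal - ∫ x, f x ∂ν + log (∫ x, exp (f x) ∂μ) := by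
  have := isProbabilityMeasure_tilted hf
  rw [toReal_klDiv_of_measure_eq (hνμ.trans (absolutelyContinuous_tilted hf)) (by simp),
    toReal_klDiv_of_measure_eq hνμ (by simp), integral_llr_tilted_right hνμ hfν hf hllr]

lemma mul_sub_gibbsFunctional_tilted [IsProbabilityMeasure μ] [IsProbabilityMeasure ν]
    (hνμ : ν ≪ μ) (hllr : Integrable (llr ν μ) ν) (hφν : Integrable φ ν)
    (hφG : Integrable φ (μ.tilted fun x ↦ m * φ x))
    (hexp : Integrable (fun x ↦ exp (m * φ x)) μ) :
    m * (gibbsFunctional μ φ (μ.tilted fun x ↦ m * φ x) - gibbsFunctional μ φ ν) =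
      (klDiv ν (μ.tilted fun x ↦ m * φ x)).toReal +
        (1 - m) * ((klDiv (μ.tilted fun x ↦ m * φ x) μ).toReal - (klDiv ν μ).toReal) := by
  rw [gibbsFunctional, gibbsFunctional, toReal_klDiv_tilted_left_self hexp (hφG.const_mul m),
    toReal_klDiv_tilted_right hνμ hllr (hφν.const_mul m) hexp, integral_const_mul,
    integral_const_mul]
  ring

theorem gibbsFunctional_le_tilted_and_eq_iff [IsProbabilityMeasure μ] [IsProbabilityMeasure ν]
    (hφ : Measurable φ) (hexp : ∀ l : ℝ, Integrable (fun x ↦ exp (l * φ x)) μ)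
    (hm : m ∈ Ioc (0 : ℝ) 1) (hνfin : klDiv ν μ ≠ ⊤)
    (hcmp : m = 1 ∨ (klDiv ν μ).toReal ≤ (klDiv (μ.tilted fun x ↦ m * φ x) μ).toReal) :
    gibbsFunctional μ φ ν ≤ gibbsFunctional μ φ (μ.tilted fun x ↦ m * φ x) ∧
      (gibbsFunctional μ φ ν = gibbsFunctional μ φ (μ.tilted fun x ↦ m * φ x) ↔
        ν = μ.tilted fun x ↦ m * φ x) := by
  obtain ⟨hνμ, hllr⟩ := klDiv_ne_top_iff.mp hνfin
  have := isProbabilityMeasure_tilted (hexp m)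
  have hφν : Integrable φ ν := integrable_of_integrable_llr_of_integrable_exp_abs hφ hνμ hllr
    (by simpa using integrable_exp_mul_abs (t := 1) (hexp 1) (hexp (-1)))
  have key := mul_sub_gibbsFunctional_tilted hνμ hllr hφν
    (integrable_tilted_mul_of_integrable_exp_mul m hexp) (hexp m)
  have hdefect : 0 ≤ (1 - m) *
      ((klDiv (μ.tilted fun x ↦ m * φ x) μ).toReal - (klDiv ν μ).toReal) := by
    rcases hcmp with rfl | h
    · simp
    · exact mul_nonneg (sub_nonneg.2 hm.2) (sub_nonneg.2 h)
  have hK : 0 ≤ (klDiv ν (μ.tilted fun x ↦ m * φ x)).toReal := ENNReal.toReal_nonneg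
  have hK_eq_zero : (klDiv ν (μ.tilted fun x ↦ m * φ x)).toReal = 0 ↔
      ν = μ.tilted fun x ↦ m * φ x := by
    rw [ENNReal.toReal_eq_zero_iff, klDiv_eq_zero_iff, or_iff_left (klDiv_ne_top
      (hνμ.trans (absolutelyContinuous_tilted (hexp m)))
      (integrable_llr_tilted_right hνμ (hφν.const_mul m) hllr (hexp m)))]
  refine ⟨sub_nonneg.mp (nonneg_of_mul_nonneg_right (key ▸ add_nonneg hK hdefect) hm.1),
    fun heq ↦ hK_eq_zero.mp ?_, fun heq ↦ heq ▸ rfl⟩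
  rw [heq, sub_self, mul_zero] at key
  linarith

end

theorem tilted_measure_maximizes_GVP_general
    {S : Type*} [MeasurableSpace S] (μ : Measure S) [IsProbabilityMeasure μ]
    (φ : S → ℝ) (hφ : Measurable φ)
    (hexp : ∀ l : ℝ, Integrable (fun x => Real.exp (l * φ x)) μ)
    (mstar : ℝ) (hmem : mstar ∈ Ioc (0 : ℝ) 1)
    (hcase : mstar = 1 ∨
      relEntropy (μ.tilted fun x => mstar * φ x) μ = (Real.log 2 : EReal))
    (ν : Measure S) [IsProbabilityMeasure ν]
    (hν : relEntropy ν μ ≤ (Real.log 2 : EReal)) :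
    (∫ x, φ x ∂ν - (relEntropy ν μ).toReal ≤
      ∫ x, φ x ∂(μ.tilted fun x => mstar * φ x) -
        (relEntropy (μ.tilted fun x => mstar * φ x) μ).toReal) ∧
    ((∫ x, φ x ∂ν - (relEntropy ν μ).toReal =
      ∫ x, φ x ∂(μ.tilted fun x => mstar * φ x) -
        (relEntropy (μ.tilted fun x => mstar * φ x) μ).toReal) ↔
      ν = μ.tilted fun x => mstar * φ x) := by
  have := isProbabilityMeasure_tilted (hexp mstar)
  rw [relEntropy_eq_klDiv] at hν
  have hνfin : klDiv ν μ ≠ ⊤ :=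
    EReal.coe_ennreal_eq_top_iff.not.mp (ne_top_of_le_ne_top (EReal.coe_ne_top _) hν)
  have hν_le : (klDiv ν μ).toReal ≤ log 2 := by
    simpa using EReal.toReal_le_toReal hν (EReal.coe_ennreal_ne_bot _) (EReal.coe_ne_top _)
  have hcmp : mstar = 1 ∨
      (klDiv ν μ).toReal ≤ (klDiv (μ.tilted fun x ↦ mstar * φ x) μ).toReal := by
    refine hcase.imp_right fun hG ↦ ?_
    rwa [← toReal_relEntropy (μ.tilted _) μ, hG, EReal.toReal_coe]
  simpa only [gibbsFunctional, toReal_relEntropy] using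
    gibbsFunctional_le_tilted_and_eq_iff hφ hexp hmem hνfin hcmp

theorem tilted_measure_maximizes_GVP
    {S : Type*} [MeasurableSpace S] (μ : Measure S) [IsProbabilityMeasure μ]
    (φ : S → ℝ) (hφ : Measurable φ)
    (hexp : ∀ l : ℝ, Integrable (fun x => Real.exp (l * φ x)) μ)
    (mstar : ℝ) (hmem : mstar ∈ Ioc (0 : ℝ) 1)
    (hcase : mstar = 1 ∨
      relEntropy (μ.tilted fun x => mstar * φ x) μ = (Real.log 2 : EReal))
    (ν : Measure S) [IsProbabilityMeasure ν]
    (hν : relEntropy ν μ ≤ (Real.log 2 : EReal))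
    (hν1 : mstar = 1 → relEntropy ν μ ≤ relEntropy (μ.tilted fun x => mstar * φ x) μ) :
    (∫ x, φ x ∂ν - (relEntropy ν μ).toReal ≤
      ∫ x, φ x ∂(μ.tilted fun x => mstar * φ x) -
        (relEntropy (μ.tilted fun x => mstar * φ x) μ).toReal) ∧
    ((∫ x, φ x ∂ν - (relEntropy ν μ).toReal =
      ∫ x, φ x ∂(μ.tilted fun x => mstar * φ x) -
        (relEntropy (μ.tilted fun x => mstar * φ x) μ).toReal) ↔
      ν = μ.tilted fun x => mstar * φ x) :=
  tilted_measure_maximizes_GVP_general μ φ hφ hexp mstar hmem hcase ν hν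
end

section
/- If Γ'(1) − Γ(1) ≤ log 2, then inf_{m ∈ (0,1]} [ (log 2)/m + Γ(m)/m − log 2 ] = Γ(1), and this equals sup{∫φdν − H(ν|μ) : H(ν|μ) ≤ log 2}. -/
/-!
`Γ` is the cumulant generating function of `φ`. Gibbs' variational inequality
`∫ φ dν - H(ν|μ) ≤ Γ 1` holds for every `ν` of finite entropy, with equality at the tilted measure
`μ_φ = e^φ μ / ∫ e^φ dμ`, whose entropy is `Γ' 1 - Γ 1 ≤ log 2`: so the supremum is attained and
equals `Γ 1`. The same inequality for `μ_φ` and the test function `m φ` is the tangent-line bound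
`Γ m ≥ Γ 1 + (m - 1) Γ' 1`; for `m ≤ 1` and `Γ' 1 ≤ Γ 1 + log 2` it gives
`Γ m ≥ m Γ 1 - (1 - m) log 2`, i.e. the Parisi functional is at least `Γ 1` on `(0, 1]`, with
equality at `m = 1`.
-/

open MeasureTheory ProbabilityTheory Filter Set

open Real InformationTheory

section RelEntropy

variable {S : Type*} [MeasurableSpace S] {μ ν : Measure S} {f : S → ℝ}

lemma relEntropy_of_ac_of_integrable (hνμ : ν ≪ μ) (hllr : Integrable (llr ν μ) ν) :
    relEntropy ν μ = ((∫ x, llr ν μ x ∂ν : ℝ) : EReal) :=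
  if_pos ⟨hνμ, hllr⟩

lemma relEntropy_ne_top_iff : relEntropy ν μ ≠ ⊤ ↔ ν ≪ μ ∧ Integrable (llr ν μ) ν := by
  refine ⟨fun h => ?_, fun h => ?_⟩
  · by_contra hc
    exact h (if_neg hc)
  · rw [relEntropy_of_ac_of_integrable h.1 h.2]
    exact EReal.coe_ne_top _

/-- Young's inequality `|f| ≤ log ρ + e^{|f|} / ρ` for the density `ρ = dν/dμ`. -/
lemma integrable_of_relEntropy_ne_top [SigmaFinite μ] [SigmaFinite ν] (h : relEntropy ν μ ≠ ⊤)
    (hf : AEMeasurable f μ) (hexp : Integrable (fun x => exp |f x|) μ) : Integrable f ν := by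
  obtain ⟨hνμ, hllr⟩ := relEntropy_ne_top_iff.1 h
  set ρ : S → ℝ := fun x => (ν.rnDeriv μ x).toReal
  have hbound : Integrable (fun x => exp |f x| / ρ x) ν := by
    rw [← integrable_rnDeriv_smul_iff hνμ]
    have hρ : Measurable ρ := (ν.measurable_rnDeriv μ).ennreal_toReal
    refine hexp.mono (hρ.aemeasurable.smul (by fun_prop)).aestronglyMeasurable
      (ae_of_all _ fun x => ?_)
    rcases (ENNReal.toReal_nonneg : 0 ≤ ρ x).eq_or_lt with h0 | hpos
    · simp [ρ, ← h0, exp_nonneg]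
    · simp [ρ, smul_eq_mul, mul_div_cancel₀ _ hpos.ne']
  refine (hllr.add hbound).mono' (hf.mono_ac hνμ).aestronglyMeasurable ?_
  filter_upwards [Measure.rnDeriv_pos hνμ, hνμ.ae_le (Measure.rnDeriv_lt_top ν μ)]
    with x hpos hlt
  have hρ : 0 < ρ x := ENNReal.toReal_pos hpos.ne' hlt.ne
  have hyoung := add_one_le_exp (|f x| - log (ρ x))
  rw [exp_sub, exp_log hρ] at hyoung
  simp only [norm_eq_abs, Pi.add_apply, llr]
  linarith

/-- Gibbs' variational inequality, from the nonnegativity of the divergence of `ν` from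
`μ.tilted f`. -/
lemma integral_sub_toReal_relEntropy_le [IsProbabilityMeasure μ] [IsProbabilityMeasure ν]
    (h : relEntropy ν μ ≠ ⊤) (hf : Integrable f ν) (hexp : Integrable (fun x => exp (f x)) μ) :
    ∫ x, f x ∂ν - (relEntropy ν μ).toReal ≤ log (∫ x, exp (f x) ∂μ) := by
  obtain ⟨hνμ, hllr⟩ := relEntropy_ne_top_iff.1 h
  have := isProbabilityMeasure_tilted hexp
  have hgibbs := integral_llr_add_sub_measure_univ_nonneg
    (hνμ.trans (absolutelyContinuous_tilted hexp)) (integrable_llr_tilted_right hνμ hf hllr hexp)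
  rw [integral_llr_tilted_right hνμ hf hexp hllr] at hgibbs
  rw [relEntropy_of_ac_of_integrable hνμ hllr, EReal.toReal_coe]
  simp only [probReal_univ] at hgibbs
  linarith

lemma relEntropy_tilted_self [IsProbabilityMeasure μ] (hf : AEMeasurable f μ)
    (hexp : Integrable (fun x => exp (f x)) μ) (hfi : Integrable f (μ.tilted f)) :
    relEntropy (μ.tilted f) μ
      = ((∫ x, f x ∂(μ.tilted f) - log (∫ x, exp (f x) ∂μ) : ℝ) : EReal) := by
  have := isProbabilityMeasure_tilted hexp
  have hllr : llr (μ.tilted f) μ =ᵐ[μ.tilted f] fun x => f x - log (∫ x, exp (f x) ∂μ) := by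
    refine (tilted_absolutelyContinuous μ f).ae_le ?_
    filter_upwards [llr_tilted_left .rfl hexp hf, llr_self μ] with x h1 h2
    rw [h1, h2, Pi.zero_apply, add_zero]
  rw [relEntropy_of_ac_of_integrable (tilted_absolutelyContinuous μ f)
    ((hfi.sub (integrable_const _)).congr hllr.symm), integral_congr_ae hllr,
    integral_sub hfi (integrable_const _), integral_const, probReal_univ, one_smul]

end RelEntropy

/-- The tangent-line inequality for the convex function `cgf X μ`, obtained from Gibbs'
inequality for the tilted measure `μ.tilted (t * X ·)` and the test function `s * X`. -/
lemma cgf_add_deriv_mul_sub_le {Ω : Type*} [MeasurableSpace Ω] {μ : Measure Ω}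
    [IsProbabilityMeasure μ] {X : Ω → ℝ} {s t : ℝ} (ht : t ∈ interior (integrableExpSet X μ))
    (hs : s ∈ integrableExpSet X μ) :
    cgf X μ t + deriv (cgf X μ) t * (s - t) ≤ cgf X μ s := by
  have htexp : t ∈ integrableExpSet X μ := interior_subset ht
  have := isProbabilityMeasure_tilted htexp
  have hXν : Integrable X (μ.tilted (t * X ·)) := (memLp_tilted_mul ht 1).integrable le_rfl
  have hrel := relEntropy_tilted_self
    ((aemeasurable_of_mem_interior_integrableExpSet ht).const_mul t) htexp (hXν.const_mul t)
  have hgibbs := integral_sub_toReal_relEntropy_le (hrel ▸ EReal.coe_ne_top _)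
    (hXν.const_mul s) hs
  rw [hrel, EReal.toReal_coe, integral_const_mul, integral_const_mul,
    integral_tilted_mul_self ht] at hgibbs
  change _ - (_ - cgf X μ t) ≤ cgf X μ s at hgibbs
  linarith

lemma le_div_add_div_sub_of_tangent {Γ : ℝ → ℝ} {D c m : ℝ}
    (htangent : Γ 1 + D * (m - 1) ≤ Γ m) (hD : D - Γ 1 ≤ c) (hm : m ∈ Ioc (0 : ℝ) 1) :
    Γ 1 ≤ c / m + Γ m / m - c := by
  obtain ⟨hm0, hm1⟩ := hm
  rw [← add_div, le_sub_iff_add_le, le_div_iff₀ hm0]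
  nlinarith [mul_nonneg (sub_nonneg.2 hm1) (sub_nonneg.2 hD)]

lemma isLeast_div_add_div_sub_of_tangent {Γ : ℝ → ℝ} {D c : ℝ}
    (htangent : ∀ m, Γ 1 + D * (m - 1) ≤ Γ m) (hD : D - Γ 1 ≤ c) :
    IsLeast ((fun m => c / m + Γ m / m - c) '' Ioc 0 1) (Γ 1) := by
  refine ⟨⟨1, ⟨one_pos, le_rfl⟩, by simp⟩, ?_⟩
  rintro _ ⟨m, hm, rfl⟩
  exact le_div_add_div_sub_of_tangent (htangent m) hD hm

lemma isGreatest_integral_sub_relEntropy {S : Type*} [MeasurableSpace S] {μ : Measure S}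
    [IsProbabilityMeasure μ] {φ : S → ℝ} (hφ : AEMeasurable φ μ)
    (hexp : ∀ l : ℝ, Integrable (fun x => exp (l * φ x)) μ) {c : ℝ}
    (hc : deriv (cgf φ μ) 1 - cgf φ μ 1 ≤ c) :
    IsGreatest {r : ℝ | ∃ ν : Measure S, IsProbabilityMeasure ν ∧
      relEntropy ν μ ≤ (c : EReal) ∧ r = ∫ x, φ x ∂ν - (relEntropy ν μ).toReal} (cgf φ μ 1) := by
  have h1 : (1 : ℝ) ∈ interior (integrableExpSet φ μ) := by
    simp [integrableExpSet, hexp]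
  refine ⟨⟨μ.tilted (1 * φ ·), isProbabilityMeasure_tilted (hexp 1), ?_⟩, ?_⟩
  · have hφν : Integrable φ (μ.tilted (1 * φ ·)) := (memLp_tilted_mul h1 1).integrable le_rfl
    have hrel := relEntropy_tilted_self (hφ.const_mul 1) (hexp 1) (hφν.const_mul 1)
    have hD : ∫ x, 1 * φ x ∂(μ.tilted (1 * φ ·)) = deriv (cgf φ μ) 1 := by
      rw [integral_const_mul, one_mul]
      exact integral_tilted_mul_self h1
    rw [hD] at hrel
    change _ = ((deriv (cgf φ μ) 1 - cgf φ μ 1 : ℝ) : EReal) at hrel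
    rw [hrel, EReal.toReal_coe, integral_tilted_mul_self h1]
    exact ⟨EReal.coe_le_coe_iff.2 hc, by ring⟩
  · rintro _ ⟨ν, hν, hent, rfl⟩
    have hfin : relEntropy ν μ ≠ ⊤ := ne_top_of_le_ne_top (EReal.coe_ne_top c) hent
    have hexp_abs : Integrable (fun x => exp |φ x|) μ := by
      simpa using integrable_exp_mul_abs (hexp 1) (hexp (-1))
    simpa [cgf, mgf] using integral_sub_toReal_relEntropy_le hfin
      (integrable_of_relEntropy_ne_top hfin hφ hexp_abs) (by simpa using hexp 1)

theorem parisi_equals_gibbs_highTemperature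
    {S : Type*} [MeasurableSpace S] (μ : Measure S) [IsProbabilityMeasure μ]
    (φ : S → ℝ) (hφ : Measurable φ)
    (hexp : ∀ l : ℝ, Integrable (fun x => Real.exp (l * φ x)) μ)
    (Γ : ℝ → ℝ) (hΓ : Γ = fun m => Real.log (∫ x, Real.exp (m * φ x) ∂μ))
    (hhigh : deriv Γ 1 - Γ 1 ≤ Real.log 2) :
    sInf ((fun m => Real.log 2 / m + Γ m / m - Real.log 2) '' Ioc (0 : ℝ) 1) = Γ 1 ∧
    Γ 1 = sSup {r : ℝ | ∃ ν : Measure S, IsProbabilityMeasure ν ∧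
      relEntropy ν μ ≤ (Real.log 2 : EReal) ∧
      r = ∫ x, φ x ∂ν - (relEntropy ν μ).toReal} := by
  obtain rfl : Γ = cgf φ μ := hΓ
  have hinterior : interior (integrableExpSet φ μ) = univ := by
    simp [integrableExpSet, hexp]
  have htangent (m : ℝ) : cgf φ μ 1 + deriv (cgf φ μ) 1 * (m - 1) ≤ cgf φ μ m :=
    cgf_add_deriv_mul_sub_le (hinterior ▸ mem_univ 1) (hexp m)
  exact ⟨(isLeast_div_add_div_sub_of_tangent htangent hhigh).csInf_eq,
    (isGreatest_integral_sub_relEntropy hφ.aemeasurable hexp hhigh).csSup_eq.symm⟩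
end

section
/- Let g be a standard Gaussian and define H(β) = e^{−β²/2} E[cosh(βg) log cosh(βg)] for β ≥ 0. Then H'(β) = β e^{−β²/2} ( E[cosh(βg)] + E[sinh²(βg)/cosh(βg)] ), which is strictly positive for β > 0. -/
/-!
Write `H β = exp (-β ^ 2 / 2) * K β` with `K β = E[f (β g)]`, `f y = cosh y * log (cosh y)`.
Every function in sight is bounded by `exp (c * |y|)`, which has all Gaussian moments, so
differentiation under the expectation gives `K' β = E[g * f' (β g)]`. Gaussian integration by
parts `E[g ψ(g)] = E[ψ'(g)]`, applied to `ψ x = f' (β x) = sinh (β x) * (log (cosh (β x)) + 1)`,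
turns this into `β * (K β + E[cosh (β g)] + E[sinh (β g) ^ 2 / cosh (β g)])`. The term `β * K β`
cancels against the derivative of `exp (-β ^ 2 / 2)`, and positivity follows from `cosh ≥ 1`.
-/

open MeasureTheory ProbabilityTheory Real
open scoped NNReal

namespace Real

lemma abs_le_exp_abs (x : ℝ) : |x| ≤ exp |x| := by
  linarith [add_one_le_exp |x|]

lemma cosh_le_exp_abs (y : ℝ) : cosh y ≤ exp |y| := by
  rw [← cosh_abs, cosh_eq]
  linarith [exp_le_exp.2 (show -|y| ≤ |y| by linarith [abs_nonneg y])]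

lemma abs_sinh_le_exp_abs (y : ℝ) : |sinh y| ≤ exp |y| := by
  rw [abs_sinh, sinh_eq]
  linarith [exp_pos (-|y|), exp_pos |y|]

lemma log_cosh_nonneg (y : ℝ) : 0 ≤ log (cosh y) := log_nonneg (one_le_cosh y)

lemma log_cosh_add_one_le_exp_abs (y : ℝ) : log (cosh y) + 1 ≤ exp |y| := by
  have h : log (cosh y) ≤ |y| := by
    simpa using log_le_log (cosh_pos y) (cosh_le_exp_abs y)
  linarith [add_one_le_exp |y|]

lemma sinh_sq_div_cosh_le_cosh (y : ℝ) : sinh y ^ 2 / cosh y ≤ cosh y := by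
  rw [div_le_iff₀ (cosh_pos y), ← sq, cosh_sq]
  linarith

lemma abs_cosh_mul_log_cosh_le (y : ℝ) : |cosh y * log (cosh y)| ≤ exp (2 * |y|) := by
  rw [abs_of_nonneg (mul_nonneg (cosh_pos y).le (log_cosh_nonneg y)), two_mul, exp_add]
  exact mul_le_mul (cosh_le_exp_abs y) (by linarith [log_cosh_add_one_le_exp_abs y])
    (log_cosh_nonneg y) (exp_nonneg _)

lemma abs_sinh_mul_log_cosh_add_one_le (y : ℝ) :
    |sinh y * (log (cosh y) + 1)| ≤ exp (2 * |y|) := by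
  have h : 0 ≤ log (cosh y) + 1 := by linarith [log_cosh_nonneg y]
  rw [abs_mul, abs_of_nonneg h, two_mul, exp_add]
  exact mul_le_mul (abs_sinh_le_exp_abs y) (log_cosh_add_one_le_exp_abs y) h (exp_nonneg _)

lemma hasDerivAt_log_cosh (y : ℝ) : HasDerivAt (fun y ↦ log (cosh y)) (sinh y / cosh y) y :=
  (hasDerivAt_cosh y).log (cosh_pos y).ne'

lemma hasDerivAt_cosh_mul_log_cosh (y : ℝ) :
    HasDerivAt (fun y ↦ cosh y * log (cosh y)) (sinh y * (log (cosh y) + 1)) y :=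
  ((hasDerivAt_cosh y).mul (hasDerivAt_log_cosh y)).congr_deriv <| by
    field_simp [(cosh_pos y).ne']

lemma hasDerivAt_sinh_mul_log_cosh_add_one (y : ℝ) :
    HasDerivAt (fun y ↦ sinh y * (log (cosh y) + 1))
      (cosh y * log (cosh y) + cosh y + sinh y ^ 2 / cosh y) y :=
  ((hasDerivAt_sinh y).mul ((hasDerivAt_log_cosh y).add_const 1)).congr_deriv <| by
    field_simp [(cosh_pos y).ne']

end Real

namespace ProbabilityTheory

variable {μ : ℝ} {v : ℝ≥0}

lemma integrable_exp_mul_abs_gaussianReal (a : ℝ) :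
    Integrable (fun x ↦ exp (a * |x|)) (gaussianReal μ v) := by
  refine ((integrable_exp_mul_gaussianReal a).add (integrable_exp_mul_gaussianReal (-a))).mono'
    (by fun_prop) (ae_of_all _ fun x ↦ ?_)
  rw [norm_of_nonneg (exp_nonneg _)]
  rcases abs_cases x with ⟨hx, -⟩ | ⟨hx, -⟩
  · rw [hx]; exact le_add_of_nonneg_right (exp_nonneg _)
  · rw [hx, mul_neg, ← neg_mul]; exact le_add_of_nonneg_left (exp_nonneg _)

lemma integrable_gaussianReal_of_abs_le_exp {f : ℝ → ℝ}
    (hf : AEStronglyMeasurable f (gaussianReal μ v)) {C a : ℝ}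
    (hfC : ∀ x, |f x| ≤ C * exp (a * |x|)) : Integrable f (gaussianReal μ v) :=
  ((integrable_exp_mul_abs_gaussianReal a).const_mul C).mono' hf (ae_of_all _ hfC)

lemma integrable_gaussianReal_iff_integrable_gaussianPDFReal_mul (hv : v ≠ 0) {f : ℝ → ℝ} :
    Integrable f (gaussianReal μ v) ↔ Integrable (fun x ↦ gaussianPDFReal μ v x * f x) := by
  rw [gaussianReal_of_var_ne_zero _ hv, integrable_withDensity_iff_integrable_smul'
    (measurable_gaussianPDF _ _) (ae_of_all _ fun _ ↦ gaussianPDF_lt_top)]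
  simp [toReal_gaussianPDF]

lemma hasDerivAt_gaussianPDFReal (μ : ℝ) (v : ℝ≥0) (x : ℝ) :
    HasDerivAt (gaussianPDFReal μ v) (-((x - μ) / v) * gaussianPDFReal μ v x) x := by
  have hsq : HasDerivAt (fun y ↦ -(y - μ) ^ 2 / (2 * v)) (-(2 * (x - μ)) / (2 * v)) x := by
    simpa using ((((hasDerivAt_id x).sub_const μ).fun_pow 2).fun_neg).div_const (2 * (v : ℝ))
  rw [gaussianPDFReal_def]
  refine (hsq.exp.const_mul (√(2 * π * v))⁻¹).congr_deriv ?_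
  by_cases hv : (v : ℝ) = 0
  · simp [hv]
  · field_simp

/-- Gaussian integration by parts (Stein's lemma). -/
theorem integral_sub_mul_gaussianReal_eq_mul_integral_deriv (hv : v ≠ 0) {ψ ψ' : ℝ → ℝ}
    (hψ : ∀ x, HasDerivAt ψ (ψ' x) x) (hψi : Integrable ψ (gaussianReal μ v))
    (hψ'i : Integrable ψ' (gaussianReal μ v))
    (hxψi : Integrable (fun x ↦ (x - μ) * ψ x) (gaussianReal μ v)) :
    ∫ x, (x - μ) * ψ x ∂gaussianReal μ v = v * ∫ x, ψ' x ∂gaussianReal μ v := by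
  rw [integrable_gaussianReal_iff_integrable_gaussianPDFReal_mul hv] at hψi hψ'i hxψi
  have hibp : ∫ x, ψ x * (-((x - μ) / v) * gaussianPDFReal μ v x)
      = -∫ x, ψ' x * gaussianPDFReal μ v x :=
    integral_mul_deriv_eq_deriv_mul_of_integrable (fun x _ ↦ hψ x)
      (fun x _ ↦ hasDerivAt_gaussianPDFReal μ v x)
      ((hxψi.const_mul (-(v : ℝ)⁻¹)).congr (ae_of_all _ fun x ↦ by simp only [Pi.mul_apply]; ring))
      (hψ'i.congr (ae_of_all _ fun x ↦ by simp only [Pi.mul_apply]; ring))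
      (hψi.congr (ae_of_all _ fun x ↦ by simp only [Pi.mul_apply]; ring))
  simp only [integral_gaussianReal_eq_integral_smul hv, smul_eq_mul]
  calc ∫ x, gaussianPDFReal μ v x * ((x - μ) * ψ x)
      = -v * ∫ x, ψ x * (-((x - μ) / v) * gaussianPDFReal μ v x) := by
        rw [← integral_const_mul]
        congr 1 with x
        field_simp
    _ = v * ∫ x, gaussianPDFReal μ v x * ψ' x := by
        rw [hibp]
        simp only [mul_comm (ψ' _)]
        ring

lemma integrable_comp_mul_gaussianReal {f : ℝ → ℝ} (hf : Continuous f) {k : ℝ}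
    (hfk : ∀ y, |f y| ≤ exp (k * |y|)) (β : ℝ) :
    Integrable (fun x ↦ f (β * x)) (gaussianReal μ v) :=
  integrable_gaussianReal_of_abs_le_exp (by fun_prop) (C := 1) (a := k * |β|) fun x ↦ by
    simpa [abs_mul, mul_assoc] using hfk (β * x)

lemma integrable_mul_comp_mul_gaussianReal {f : ℝ → ℝ} (hf : Continuous f) {k : ℝ}
    (hfk : ∀ y, |f y| ≤ exp (k * |y|)) (β : ℝ) :
    Integrable (fun x ↦ x * f (β * x)) (gaussianReal μ v) :=
  integrable_gaussianReal_of_abs_le_exp (by fun_prop) (C := 1) (a := 1 + k * |β|) fun x ↦ by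
    rw [abs_mul, one_mul, add_mul, exp_add, one_mul]
    refine mul_le_mul (abs_le_exp_abs x) ?_ (abs_nonneg _) (exp_nonneg _)
    simpa [abs_mul, mul_assoc] using hfk (β * x)

theorem hasDerivAt_integral_comp_mul_gaussianReal {f f' : ℝ → ℝ}
    (hf : ∀ y, HasDerivAt f (f' y) y) (hf' : Continuous f') {k : ℝ}
    (hfk : ∀ y, |f y| ≤ exp (k * |y|)) (hf'k : ∀ y, |f' y| ≤ exp (k * |y|)) (β₀ : ℝ) :
    HasDerivAt (fun β ↦ ∫ x, f (β * x) ∂gaussianReal μ v)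
      (∫ x, x * f' (β₀ * x) ∂gaussianReal μ v) β₀ := by
  have hfc : Continuous f := continuous_iff_continuousAt.2 fun y ↦ (hf y).continuousAt
  refine (hasDerivAt_integral_of_dominated_loc_of_deriv_le (Metric.ball_mem_nhds β₀ one_pos)
    (F' := fun β x ↦ x * f' (β * x))
    (Filter.Eventually.of_forall fun β ↦ (integrable_comp_mul_gaussianReal hfc hfk β).1)
    (integrable_comp_mul_gaussianReal hfc hfk β₀)
    (integrable_mul_comp_mul_gaussianReal hf' hf'k β₀).1
    (bound := fun x ↦ exp ((1 + |k| * (|β₀| + 1)) * |x|)) ?_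
    (integrable_exp_mul_abs_gaussianReal _)
    (ae_of_all _ fun x β _ ↦ ((hf (β * x)).comp β (hasDerivAt_mul_const x)).congr_deriv
      (mul_comm _ _))).2
  refine ae_of_all _ fun x β hβ ↦ ?_
  have hβ : |β| ≤ |β₀| + 1 := by
    rw [Metric.mem_ball, Real.dist_eq] at hβ
    linarith [abs_sub_abs_le_abs_sub β β₀]
  rw [norm_mul, Real.norm_eq_abs, Real.norm_eq_abs, add_mul, one_mul, exp_add]
  refine mul_le_mul (abs_le_exp_abs x) ((hf'k _).trans (exp_le_exp.2 ?_)) (abs_nonneg _)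
    (exp_nonneg _)
  rw [abs_mul, ← mul_assoc]
  refine mul_le_mul_of_nonneg_right ?_ (abs_nonneg x)
  calc k * |β| ≤ |k| * |β| := by gcongr; exact le_abs_self k
    _ ≤ |k| * (|β₀| + 1) := by gcongr

end ProbabilityTheory

lemma integrable_cosh_mul_gaussianReal {μ : ℝ} {v : ℝ≥0} (β : ℝ) :
    Integrable (fun x ↦ cosh (β * x)) (gaussianReal μ v) :=
  integrable_comp_mul_gaussianReal continuous_cosh (k := 1)
    (fun y ↦ by simpa [abs_of_pos (cosh_pos y)] using cosh_le_exp_abs y) β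

lemma integrable_sinh_sq_div_cosh_mul_gaussianReal {μ : ℝ} {v : ℝ≥0} (β : ℝ) :
    Integrable (fun x ↦ sinh (β * x) ^ 2 / cosh (β * x)) (gaussianReal μ v) :=
  integrable_comp_mul_gaussianReal (f := fun y ↦ sinh y ^ 2 / cosh y)
    ((continuous_sinh.pow 2).div continuous_cosh fun y ↦ (cosh_pos y).ne') (k := 1)
    (fun y ↦ by
      rw [abs_of_nonneg (by positivity), one_mul]
      exact (sinh_sq_div_cosh_le_cosh y).trans (cosh_le_exp_abs y)) β

lemma integrable_cosh_mul_log_cosh_mul_gaussianReal {μ : ℝ} {v : ℝ≥0} (β : ℝ) :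
    Integrable (fun x ↦ cosh (β * x) * log (cosh (β * x))) (gaussianReal μ v) :=
  integrable_comp_mul_gaussianReal (f := fun y ↦ cosh y * log (cosh y))
    (by fun_prop (disch := exact fun y ↦ (cosh_pos y).ne')) abs_cosh_mul_log_cosh_le β

lemma hasDerivAt_integral_cosh_mul_log_cosh_gaussianReal (β : ℝ) :
    HasDerivAt (fun β ↦ ∫ x, cosh (β * x) * log (cosh (β * x)) ∂gaussianReal 0 1)
      (β * ((∫ x, cosh (β * x) * log (cosh (β * x)) ∂gaussianReal 0 1)
        + (∫ x, cosh (β * x) ∂gaussianReal 0 1)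
        + ∫ x, sinh (β * x) ^ 2 / cosh (β * x) ∂gaussianReal 0 1)) β := by
  have hK := integrable_cosh_mul_log_cosh_mul_gaussianReal (μ := 0) (v := 1) β
  have hC := integrable_cosh_mul_gaussianReal (μ := 0) (v := 1) β
  have hS := integrable_sinh_sq_div_cosh_mul_gaussianReal (μ := 0) (v := 1) β
  have hψ : Continuous fun y ↦ sinh y * (log (cosh y) + 1) := by
    fun_prop (disch := exact fun y ↦ (cosh_pos y).ne')
  have hstein := integral_sub_mul_gaussianReal_eq_mul_integral_deriv (μ := 0) one_ne_zero
    (ψ := fun x ↦ sinh (β * x) * (log (cosh (β * x)) + 1))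
    (fun x ↦ ((hasDerivAt_sinh_mul_log_cosh_add_one (β * x)).comp x
      (hasDerivAt_const_mul β)).congr_deriv (mul_comm _ _))
    (integrable_comp_mul_gaussianReal hψ abs_sinh_mul_log_cosh_add_one_le β)
    (((hK.add hC).add hS).const_mul β)
    (by simpa using integrable_mul_comp_mul_gaussianReal hψ abs_sinh_mul_log_cosh_add_one_le β)
  simp only [sub_zero, NNReal.coe_one, one_mul] at hstein
  refine (hasDerivAt_integral_comp_mul_gaussianReal hasDerivAt_cosh_mul_log_cosh hψ
    abs_cosh_mul_log_cosh_le abs_sinh_mul_log_cosh_add_one_le β).congr_deriv ?_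
  rw [hstein, integral_const_mul, integral_add _ hS, integral_add hK hC]
  exact hK.add hC

theorem deriv_H_gaussian_coshLogCosh
    (H : ℝ → ℝ)
    (hH : H = fun β => Real.exp (-β ^ 2 / 2) *
      ∫ x, Real.cosh (β * x) * Real.log (Real.cosh (β * x)) ∂(gaussianReal 0 1)) :
    (∀ β : ℝ, deriv H β = β * Real.exp (-β ^ 2 / 2) *
      ((∫ x, Real.cosh (β * x) ∂(gaussianReal 0 1)) +
       ∫ x, Real.sinh (β * x) ^ 2 / Real.cosh (β * x) ∂(gaussianReal 0 1))) ∧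
    (∀ β : ℝ, 0 < β → 0 < deriv H β) := by
  have hH' : ∀ β, HasDerivAt H (β * exp (-β ^ 2 / 2) *
      ((∫ x, cosh (β * x) ∂gaussianReal 0 1) +
        ∫ x, sinh (β * x) ^ 2 / cosh (β * x) ∂gaussianReal 0 1)) β := by
    intro β
    have hexp : HasDerivAt (fun β ↦ exp (-β ^ 2 / 2)) (-β * exp (-β ^ 2 / 2)) β := by
      refine (((hasDerivAt_id β).fun_pow 2).fun_neg.div_const 2).exp.congr_deriv ?_
      simp only [id, Nat.cast_ofNat]
      ring
    subst hH
    exact (hexp.mul (hasDerivAt_integral_cosh_mul_log_cosh_gaussianReal β)).congr_deriv (by ring)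
  refine ⟨fun β ↦ (hH' β).deriv, fun β hβ ↦ ?_⟩
  have hC : 1 ≤ ∫ x, cosh (β * x) ∂gaussianReal 0 1 := by
    simpa using integral_mono (integrable_const 1) (integrable_cosh_mul_gaussianReal β)
      fun x ↦ one_le_cosh (β * x)
  have hS : 0 ≤ ∫ x, sinh (β * x) ^ 2 / cosh (β * x) ∂gaussianReal 0 1 :=
    integral_nonneg fun x ↦ by positivity
  rw [(hH' β).deriv]
  exact mul_pos (mul_pos hβ (exp_pos _)) (by linarith)
end
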